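/- Let (Ω,T) be a subshift over a finite alphabet A with associated set of words W. Then (Ω,T) is minimal (every orbit {T^n ω : n ∈ ℤ} is dense in Ω) if and only if ν(v) > 0 for every nonempty v ∈ W. In particular, if (Ω,T) satisfies (PQ) (there is C > 0 with ν(v) ≥ C for all nonempty v ∈ W), then (Ω,T) is minimal. -/

import Mathlib

/-!
Cylinder sets are open and form a basis, so `Ω` is minimal iff every word of `W` occurs in
every point of `Ω`. By compactness such occurrences then lie in a bounded window, hence `v`
is a factor of every word of `W` of length at least some `R`; cutting a long word into blocks
of length `R` gives `ν(v) ≥ 1/(2R)`. Conversely, if `v` does not occur in some `ω ∈ Ω`, the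
prefixes of `ω` are arbitrarily long words of `W` without `v`, so `ν(v) ≤ 0`.
-/

open Filter Topology

namespace SubshiftErgodic

variable {A : Type*}

/-- The shift map `T` on two-sided sequences over `A`: `(T ω) n = ω (n+1)`. -/
def shift (ω : ℤ → A) : ℤ → A := fun n => ω (n + 1)

/-- The `n`-th power of the shift: `(shiftZ n ω) k = ω (k + n)`. -/
def shiftZ (n : ℤ) (ω : ℤ → A) : ℤ → A := fun k => ω (k + n)

/-- `Ω` is a subshift: a closed, shift-invariant subset of `A^ℤ`. -/
def IsSubshift [TopologicalSpace A] (Ω : Set (ℤ → A)) : Prop :=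
  IsClosed Ω ∧ shift '' Ω = Ω

/-- Minimality: every orbit `{T^n ω : n ∈ ℤ}` is dense in `Ω`. -/
def IsMinimal [TopologicalSpace A] (Ω : Set (ℤ → A)) : Prop :=
  ∀ ω ∈ Ω, Ω ⊆ closure {ρ | ∃ n : ℤ, ρ = shiftZ n ω}

/-- The finite word `w` occurs in the sequence `ω` at position `k`. -/
def OccursAt (w : List A) (ω : ℤ → A) (k : ℤ) : Prop :=
  ∀ i : Fin w.length, ω (k + (i : ℕ)) = w.get i

/-- The set `W = W(Ω)` of finite words occurring as factors of elements of `Ω`. -/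
def words (Ω : Set (ℤ → A)) : Set (List A) :=
  {w | ∃ ω ∈ Ω, ∃ k : ℤ, OccursAt w ω k}

/-- `v` occurs as a factor of the finite word `w` at position `i`. -/
def OccursIn (v w : List A) (i : ℕ) : Prop :=
  i + v.length ≤ w.length ∧ v <+: w.drop i

/-- `♯_v(w)`: the number of occurrences of `v` as a factor of `w`. -/
noncomputable def occ (v w : List A) : ℕ :=
  {i : ℕ | OccursIn v w i}.ncard

/-- `z` is a return word of `u` (relative to the set of words `W`). -/
def IsReturnWord (W : Set (List A)) (z u : List A) : Prop :=
  z ∈ W ∧ z ++ u ∈ W ∧ occ u (z ++ u) = 2 ∧ u <+: z ++ u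

/-- The maximal number of pairwise disjoint occurrences of `v` as a factor of `w`. -/
noncomputable def maxDisjoint (v w : List A) : ℕ :=
  sSup {m : ℕ | ∃ s : Fin m → ℕ, (∀ i, OccursIn v w (s i)) ∧
    ∀ i j : Fin m, i < j → s i + v.length ≤ s j}

/-- The filter expressing `|w| → ∞` along words `w ∈ W`. -/
def wordsFilter (W : Set (List A)) : Filter (List A) :=
  ⨅ L : ℕ, Filter.principal {w | w ∈ W ∧ L ≤ w.length}

/-- `lim_{|w| → ∞} g w = x` over `w ∈ W`: for every `ε > 0` there is `L` with
`‖g w - x‖ ≤ ε` for all `w ∈ W` with `|w| ≥ L`. -/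
def TendstoWords {B : Type*} [SeminormedAddCommGroup B] (W : Set (List A))
    (g : List A → B) (x : B) : Prop :=
  ∀ ε : ℝ, 0 < ε → ∃ L : ℕ, ∀ w ∈ W, L ≤ w.length → ‖g w - x‖ ≤ ε

/-- `liminf_{|w| → ∞} g w` over `w ∈ W`, valued in the extended reals. -/
noncomputable def liminfWords (W : Set (List A)) (g : List A → ℝ) : EReal :=
  Filter.liminf (fun w => (g w : EReal)) (wordsFilter W)

/-- `limsup_{|w| → ∞} g w` over `w ∈ W`, valued in the extended reals. -/
noncomputable def limsupWords (W : Set (List A)) (g : List A → ℝ) : EReal :=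
  Filter.limsup (fun w => (g w : EReal)) (wordsFilter W)

/-- `ν(v) = liminf_{|w| → ∞} l_v(w)/|w|`, where
`l_v(w) = (max number of pairwise disjoint copies of v in w) ⬝ |v|`. -/
noncomputable def nu (W : Set (List A)) (v : List A) : EReal :=
  liminfWords W (fun w => ((maxDisjoint v w * v.length : ℕ) : ℝ) / (w.length : ℝ))

/-- Condition (PQ): uniform positivity of quasiweights. -/
def PQ (W : Set (List A)) : Prop :=
  ∃ C : ℝ, 0 < C ∧ ∀ v ∈ W, v ≠ [] → (C : EReal) ≤ nu W v

/-- Unique ergodicity: all word frequencies `♯_v(w)/|w|` converge as `|w| → ∞`. -/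
def UniquelyErgodic (Ω : Set (ℤ → A)) : Prop :=
  ∀ v ∈ words Ω, ∃ x : ℝ,
    TendstoWords (words Ω) (fun w => (occ v w : ℝ) / (w.length : ℝ)) x

/-- `F : W → ℝ` is subadditive. -/
def IsSubadditive (W : Set (List A)) (F : List A → ℝ) : Prop :=
  ∀ a b : List A, a ∈ W → b ∈ W → a ++ b ∈ W → F (a ++ b) ≤ F a + F b

/-- `F^(n) = max { F v / |v| : v ∈ W, |v| = n }`. -/
noncomputable def wordSup (W : Set (List A)) (F : List A → ℝ) (n : ℕ) : ℝ :=
  sSup ((fun v => F v / (v.length : ℝ)) '' {v | v ∈ W ∧ v.length = n})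

/-- Condition (SET): the uniform subadditive ergodic theorem holds, i.e. for every
subadditive `F` the limit `lim_{|w|→∞} F(w)/|w|` exists and equals `inf_{n ≥ 1} F^(n)`
(in the extended reals). -/
def SET (W : Set (List A)) : Prop :=
  ∀ F : List A → ℝ, IsSubadditive W F →
    Filter.Tendsto (fun w => ((F w / (w.length : ℝ) : ℝ) : EReal)) (wordsFilter W)
      (nhds (⨅ n : {n : ℕ // 1 ≤ n}, ((wordSup W F n.1 : ℝ) : EReal)))

/-- A Banach-space-valued function `F : W → B` is additive. -/
def IsAdditive {B : Type*} [SeminormedAddCommGroup B] (W : Set (List A))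
    (F : List A → B) : Prop :=
  ∃ D : ℝ, 0 < D ∧ ∃ c : ℕ → ℝ, Antitone c ∧ (∀ n, 0 ≤ c n) ∧
    Filter.Tendsto c Filter.atTop (nhds 0) ∧
    (∀ vs : List (List A), (∀ v ∈ vs, v ∈ W) → vs.flatten ∈ W →
      ‖F vs.flatten - (vs.map F).sum‖ ≤ (vs.map fun v => c v.length * (v.length : ℝ)).sum) ∧
    ∀ v ∈ W, ‖F v‖ ≤ D * (v.length : ℝ)

/-- Condition (HP): powers in `W` have uniformly bounded exponent. -/
def HP (W : Set (List A)) : Prop :=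
  ∃ N : ℕ, 0 < N ∧ ∀ v : List A, v ≠ [] → ∀ k : ℕ,
    (List.replicate k v).flatten ∈ W → k ≤ N

/-- Condition (PW): uniform positivity of weights. -/
def PW (W : Set (List A)) : Prop :=
  ∃ E : ℝ, 0 < E ∧ ∀ v ∈ W, v ≠ [] →
    (E : EReal) ≤ liminfWords W (fun w => ((occ v w * v.length : ℕ) : ℝ) / (w.length : ℝ))

/-- Linear repetitivity. -/
def LinearlyRepetitive (W : Set (List A)) : Prop :=
  ∃ D : ℝ, 0 < D ∧ ∀ v ∈ W, v ≠ [] → ∀ w ∈ W, D * (v.length : ℝ) ≤ (w.length : ℝ) →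
    v <:+: w

/-- Aperiodicity: no element of `Ω` is periodic. -/
def Aperiodic (Ω : Set (ℤ → A)) : Prop :=
  ∀ ω ∈ Ω, ∀ p : ℕ, 1 ≤ p → shiftZ (p : ℤ) ω ≠ ω

/-- `m(n)`: the minimal length of a return word of a word of length `n` in `W`. -/
noncomputable def mRet (W : Set (List A)) (n : ℕ) : ℕ :=
  sInf {k : ℕ | ∃ v z : List A, v ∈ W ∧ v.length = n ∧ IsReturnWord W z v ∧ z.length = k}

/-- `k_ω^w`: the minimal nonnegative position at which `w` occurs in `ω`. -/
noncomputable def firstOcc (ω : ℤ → A) (w : List A) : ℕ :=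
  sInf {k : ℕ | OccursAt w ω (k : ℤ)}

/-- `F_ω(w) = ∑_{j=0}^{|w|-1} f(T^{k_ω^w + j} ω)`. -/
noncomputable def birkhoffF {B : Type*} [AddCommMonoid B] (f : (ℤ → A) → B)
    (ω : ℤ → A) (w : List A) : B :=
  ∑ j ∈ Finset.range w.length, f (shiftZ ((firstOcc ω w : ℤ) + (j : ℤ)) ω)

section Occurrences

theorem occursAt_iff_getElem {w : List A} {ω : ℤ → A} {k : ℤ} :
    OccursAt w ω k ↔ ∀ j (hj : j < w.length), ω (k + j) = w[j] :=
  ⟨fun h j hj => h ⟨j, hj⟩, fun h j => h j j.2⟩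

theorem occursIn_iff_getElem {v w : List A} {i : ℕ} :
    OccursIn v w i ↔ ∃ h : i + v.length ≤ w.length, ∀ j (hj : j < v.length),
      v[j] = w[i + j] := by
  simp only [OccursIn, List.prefix_iff_getElem, List.getElem_drop, List.length_drop]
  exact ⟨fun ⟨h, _, h'⟩ => ⟨h, h'⟩, fun ⟨h, h'⟩ => ⟨h, by omega, h'⟩⟩

theorem occursAt_shiftZ {w : List A} {ω : ℤ → A} {n k : ℤ} :
    OccursAt w (shiftZ n ω) k ↔ OccursAt w ω (k + n) := by
  simp only [OccursAt, shiftZ, add_right_comm]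

theorem OccursAt.occursAt_of_occursIn {v w : List A} {ω : ℤ → A} {k : ℤ} {i : ℕ}
    (hw : OccursAt w ω k) (hv : OccursIn v w i) : OccursAt v ω (k + i) := by
  obtain ⟨hlen, hv⟩ := occursIn_iff_getElem.1 hv
  rw [occursAt_iff_getElem] at hw ⊢
  intro j hj
  rw [hv j hj, ← hw (i + j) (by omega), add_assoc, Nat.cast_add]

theorem OccursAt.occursIn_of_occursAt {v w : List A} {ω : ℤ → A} {k : ℤ} {i : ℕ}
    (hw : OccursAt w ω k) (hi : i + v.length ≤ w.length) (hv : OccursAt v ω (k + i)) :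
    OccursIn v w i := by
  rw [occursAt_iff_getElem] at hw hv
  refine occursIn_iff_getElem.2 ⟨hi, fun j hj => ?_⟩
  rw [← hv j hj, ← hw (i + j) (by omega), add_assoc, Nat.cast_add]

theorem OccursIn.trans {u v w : List A} {i j : ℕ} (huv : OccursIn u v i)
    (hvw : OccursIn v w j) : OccursIn u w (j + i) := by
  obtain ⟨hi, hu⟩ := occursIn_iff_getElem.1 huv
  obtain ⟨hj, hv⟩ := occursIn_iff_getElem.1 hvw
  refine occursIn_iff_getElem.2 ⟨by omega, fun l hl => ?_⟩
  rw [hu l hl, hv (i + l) (by omega)]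
  simp only [add_assoc]

theorem occursIn_take_drop {w : List A} {j n : ℕ} (h : j + n ≤ w.length) :
    OccursIn ((w.drop j).take n) w j :=
  ⟨by simp; omega, List.take_prefix _ _⟩

theorem mem_words_of_occursIn {Ω : Set (ℤ → A)} {v w : List A} {i : ℕ}
    (hw : w ∈ words Ω) (hv : OccursIn v w i) : v ∈ words Ω := by
  obtain ⟨ω, hω, k, hk⟩ := hw
  exact ⟨ω, hω, k + i, hk.occursAt_of_occursIn hv⟩

def window (ω : ℤ → A) (a : ℤ) (n : ℕ) : List A :=
  List.ofFn fun j : Fin n => ω (a + j)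

@[simp]
theorem length_window (ω : ℤ → A) (a : ℤ) (n : ℕ) : (window ω a n).length = n := by
  simp [window]

theorem occursAt_window_iff {ω σ : ℤ → A} {a : ℤ} {n : ℕ} :
    OccursAt (window ω a n) σ a ↔ ∀ j < n, σ (a + j) = ω (a + j) := by
  simp [occursAt_iff_getElem, window]

theorem occursAt_window (ω : ℤ → A) (a : ℤ) (n : ℕ) : OccursAt (window ω a n) ω a :=
  occursAt_window_iff.2 fun _ _ => rfl

theorem window_mem_words {Ω : Set (ℤ → A)} {ω : ℤ → A} (hω : ω ∈ Ω) (a : ℤ) (n : ℕ) :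
    window ω a n ∈ words Ω :=
  ⟨ω, hω, a, occursAt_window ω a n⟩

end Occurrences

section Topology

theorem shift_injective : Function.Injective (shift : (ℤ → A) → ℤ → A) := fun ω σ h =>
  funext fun k => by simpa [shift] using congrFun h (k - 1)

theorem shift_shiftZ (n : ℤ) (ω : ℤ → A) : shift (shiftZ n ω) = shiftZ (n + 1) ω :=
  funext fun k => by simp only [shift, shiftZ, add_assoc, add_comm 1 n]

theorem IsSubshift.shiftZ_mem [TopologicalSpace A] {Ω : Set (ℤ → A)} (hΩ : IsSubshift Ω)
    {ω : ℤ → A} (hω : ω ∈ Ω) (n : ℤ) : shiftZ n ω ∈ Ω := by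
  induction n using Int.induction_on with
  | zero => rwa [show shiftZ 0 ω = ω from funext fun k => by simp [shiftZ]]
  | succ n ih => rw [← shift_shiftZ, ← hΩ.2]; exact Set.mem_image_of_mem _ ih
  | pred n ih =>
    rw [← hΩ.2] at ih
    obtain ⟨τ, hτ, hτn⟩ := ih
    rwa [shift_injective (hτn.trans (by rw [shift_shiftZ, sub_add_cancel]))] at hτ

variable [TopologicalSpace A] [DiscreteTopology A]

theorem isOpen_setOf_occursAt (w : List A) (k : ℤ) : IsOpen {ω : ℤ → A | OccursAt w ω k} := by
  simp only [OccursAt, Set.ofPred_forall]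
  exact isOpen_iInter_of_finite fun j =>
    (continuous_apply (A := fun _ : ℤ => A) _).isOpen_preimage {w.get j} (isOpen_discrete _)

theorem exists_window_subset_of_mem_nhds {ρ : ℤ → A} {U : Set (ℤ → A)} (hU : U ∈ 𝓝 ρ) :
    ∃ N : ℕ, {σ | OccursAt (window ρ (-N) (2 * N + 1)) σ (-N)} ⊆ U := by
  rw [nhds_pi, Filter.mem_pi] at hU
  obtain ⟨I, hI, t, ht, hIt⟩ := hU
  obtain ⟨N, hN⟩ := (hI.image Int.natAbs).bddAbove
  refine ⟨N, fun σ hσ => hIt fun i hi => ?_⟩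
  have hiN : i.natAbs ≤ N := hN ⟨i, hi, rfl⟩
  have hσi := occursAt_window_iff.1 hσ (i + N).toNat (by omega)
  rw [show -(N : ℤ) + (i + N).toNat = i by omega] at hσi
  simpa [hσi, nhds_discrete] using ht i

theorem isMinimal_iff_forall_occursAt {Ω : Set (ℤ → A)} :
    IsMinimal Ω ↔ ∀ v ∈ words Ω, v ≠ [] → ∀ ω ∈ Ω, ∃ k, OccursAt v ω k := by
  constructor
  · rintro hmin v ⟨ω₀, hω₀, k₀, hk₀⟩ - ω hω
    obtain ⟨σ, hσ, n, rfl⟩ :=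
      mem_closure_iff.1 (hmin ω hω hω₀) _ (isOpen_setOf_occursAt v k₀) hk₀
    exact ⟨k₀ + n, occursAt_shiftZ.1 hσ⟩
  · intro h ω hω ρ hρ
    refine mem_closure_iff_nhds.2 fun U hU => ?_
    obtain ⟨N, hNU⟩ := exists_window_subset_of_mem_nhds hU
    have hne : window ρ (-N) (2 * N + 1) ≠ [] := by
      rw [← List.length_pos_iff, length_window]; omega
    obtain ⟨k, hk⟩ := h _ (window_mem_words hρ _ _) hne ω hω
    exact ⟨shiftZ (k + N) ω, hNU (occursAt_shiftZ.2 (by convert hk using 1; ring)),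
      k + N, rfl⟩

theorem exists_natAbs_le_occursAt [Finite A] {Ω : Set (ℤ → A)} (hΩ : IsClosed Ω)
    {v : List A} (h : ∀ ω ∈ Ω, ∃ k, OccursAt v ω k) :
    ∃ R : ℕ, ∀ ω ∈ Ω, ∃ k : ℤ, k.natAbs ≤ R ∧ OccursAt v ω k := by
  let U : ℕ → Set (ℤ → A) := fun R => ⋃ k ∈ {k : ℤ | k.natAbs ≤ R}, {ω | OccursAt v ω k}
  have hUo (R : ℕ) : IsOpen (U R) := isOpen_biUnion fun k _ => isOpen_setOf_occursAt v k
  have hUmono : Monotone U := fun R S hRS =>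
    Set.biUnion_subset_biUnion_left fun k (hk : k.natAbs ≤ R) => hk.trans hRS
  have hcover : Ω ⊆ ⋃ R, U R := fun ω hω =>
    let ⟨k, hk⟩ := h ω hω
    Set.mem_iUnion.2 ⟨k.natAbs, Set.mem_biUnion (le_refl k.natAbs) hk⟩
  obtain ⟨R, hR⟩ := hΩ.isCompact.elim_directed_cover U hUo hcover hUmono.directed_le
  exact ⟨R, fun ω hω => by simpa [U] using hR hω⟩

theorem IsSubshift.exists_forall_occursIn [Finite A] {Ω : Set (ℤ → A)} (hΩ : IsSubshift Ω)
    {v : List A} (h : ∀ ω ∈ Ω, ∃ k, OccursAt v ω k) :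
    ∃ R : ℕ, 0 < R ∧ ∀ w ∈ words Ω, R ≤ w.length → ∃ i, OccursIn v w i := by
  obtain ⟨R, hR⟩ := exists_natAbs_le_occursAt hΩ.1 h
  refine ⟨2 * R + v.length + 1, by omega, ?_⟩
  rintro w ⟨ω, hω, k₀, hk₀⟩ hw
  obtain ⟨k, hkR, hk⟩ := hR _ (hΩ.shiftZ_mem hω (k₀ + R))
  refine ⟨(k + R).toNat, hk₀.occursIn_of_occursAt (by omega) ?_⟩
  rw [occursAt_shiftZ] at hk
  convert hk using 1
  omega

end Topology

section Nu

theorem eventually_wordsFilter {W : Set (List A)} {p : List A → Prop} :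
    (∀ᶠ w in wordsFilter W, p w) ↔ ∃ L : ℕ, ∀ w ∈ W, L ≤ w.length → p w := by
  have hanti : Antitone fun L : ℕ => {w | w ∈ W ∧ L ≤ w.length} :=
    fun L M hLM w hw => ⟨hw.1, hLM.trans hw.2⟩
  exact (Filter.hasBasis_iInf_principal hanti.directed_ge).eventually_iff.trans
    (by simp only [true_and, Set.mem_ofPred_eq, and_imp])

theorem maxDisjoint_eq_zero {v w : List A} (h : ∀ i, ¬ OccursIn v w i) :
    maxDisjoint v w = 0 := by
  refine Nat.le_zero.1 (csSup_le' fun m ⟨s, hs, _⟩ => Nat.le_zero.2 ?_)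
  by_contra hm
  exact h _ (hs ⟨0, Nat.pos_of_ne_zero hm⟩)

theorem le_maxDisjoint {v w : List A} (hv : v ≠ []) {m : ℕ} (s : Fin m → ℕ)
    (hs : ∀ i, OccursIn v w (s i)) (hsep : ∀ i j : Fin m, i < j → s i + v.length ≤ s j) :
    m ≤ maxDisjoint v w := by
  have hvpos : 0 < v.length := List.length_pos_iff.2 hv
  refine le_csSup ⟨w.length, ?_⟩ ⟨s, hs, hsep⟩
  rintro n ⟨t, ht, htsep⟩
  have ht_mono : StrictMono fun i : Fin n =>
      (⟨t i, by have := (ht i).1; omega⟩ : Fin w.length) :=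
    fun i j hij => by have := htsep i j hij; simp only [Fin.mk_lt_mk]; omega
  simpa using Fintype.card_le_of_injective _ ht_mono.injective

-- Take one occurrence inside each of the blocks `[b * R, (b + 1) * R)`.
theorem div_le_maxDisjoint {v w : List A} (hv : v ≠ []) {R : ℕ}
    (h : ∀ j, j + R ≤ w.length → ∃ i, i + v.length ≤ R ∧ OccursIn v w (j + i)) :
    w.length / R ≤ maxDisjoint v w := by
  have hblock (b : Fin (w.length / R)) :
      ∃ i, i + v.length ≤ R ∧ OccursIn v w (b * R + i) := by
    refine h _ ?_
    calc (b : ℕ) * R + R = (b + 1) * R := by ring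
      _ ≤ w.length / R * R := Nat.mul_le_mul_right R b.2
      _ ≤ w.length := Nat.div_mul_le_self _ _
  choose s hsR hs using hblock
  refine le_maxDisjoint hv _ hs fun a b hab => ?_
  have : ((a : ℕ) + 1) * R ≤ b * R := Nat.mul_le_mul_right R hab
  linarith [hsR a]

theorem le_nu {W : Set (List A)} {v : List A} {c : ℝ} {L : ℕ}
    (h : ∀ w ∈ W, L ≤ w.length → c ≤ ((maxDisjoint v w * v.length : ℕ) : ℝ) / w.length) :
    (c : EReal) ≤ nu W v := by
  refine le_sSup (eventually_wordsFilter.2 ⟨L, fun w hw hL => ?_⟩)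
  exact EReal.coe_le_coe_iff.2 (h w hw hL)

theorem nu_le_zero {W : Set (List A)} {v : List A}
    (h : ∀ L : ℕ, ∃ w ∈ W, L ≤ w.length ∧ maxDisjoint v w = 0) : nu W v ≤ 0 := by
  refine sSup_le fun a ha => ?_
  obtain ⟨L, hL⟩ := eventually_wordsFilter.1 ha
  obtain ⟨w, hw, hwL, hzero⟩ := h L
  simpa [hzero] using hL w hw hwL

theorem one_div_le_nu_of_forall_occursIn {Ω : Set (ℤ → A)} {v : List A} (hv : v ≠ [])
    {R : ℕ} (hR : 0 < R) (h : ∀ w ∈ words Ω, R ≤ w.length → ∃ i, OccursIn v w i) :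
    ((1 / (2 * R) : ℝ) : EReal) ≤ nu (words Ω) v := by
  refine le_nu (L := 2 * R) fun w hw hwR => ?_
  have hblocks : w.length / R ≤ maxDisjoint v w := by
    refine div_le_maxDisjoint hv fun j hj => ?_
    have hb := occursIn_take_drop hj
    obtain ⟨i, hi⟩ := h _ (mem_words_of_occursIn hw hb) (by simp; omega)
    exact ⟨i, hi.1.trans_eq (by simp; omega), hi.trans hb⟩
  have hw_len : w.length ≤ 2 * R * (maxDisjoint v w * v.length) :=
    calc w.length ≤ 2 * R * (w.length / R) := by
          have := Nat.lt_div_mul_add (a := w.length) hR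
          have : 2 ≤ w.length / R := (Nat.le_div_iff_mul_le hR).2 (by linarith)
          nlinarith
      _ ≤ 2 * R * (maxDisjoint v w * v.length) :=
          Nat.mul_le_mul_left _ (hblocks.trans (Nat.le_mul_of_pos_right _
            (List.length_pos_iff.2 hv)))
  rw [div_le_div_iff₀ (by positivity) (by norm_cast; omega), one_mul, mul_comm]
  exact_mod_cast hw_len

theorem exists_occursAt_of_nu_pos {Ω : Set (ℤ → A)} {ω : ℤ → A} (hω : ω ∈ Ω) {v : List A}
    (hnu : 0 < nu (words Ω) v) : ∃ k, OccursAt v ω k := by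
  by_contra! hv
  refine (nu_le_zero fun L => ⟨window ω 0 L, window_mem_words hω 0 L, by simp, ?_⟩).not_gt hnu
  exact maxDisjoint_eq_zero fun i hi => hv _ ((occursAt_window ω 0 L).occursAt_of_occursIn hi)

end Nu

theorem minimal_iff_nu_pos_general
    {A : Type*} [Fintype A] [TopologicalSpace A] [DiscreteTopology A]
    (Ω : Set (ℤ → A)) (hΩ : IsSubshift Ω) :
    (IsMinimal Ω ↔ ∀ v ∈ words Ω, v ≠ [] → (0 : EReal) < nu (words Ω) v) ∧
      (PQ (words Ω) → IsMinimal Ω) := by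
  have main : IsMinimal Ω ↔ ∀ v ∈ words Ω, v ≠ [] → (0 : EReal) < nu (words Ω) v := by
    rw [isMinimal_iff_forall_occursAt]
    refine forall₂_congr fun v _ => imp_congr_right fun hv => ⟨fun hocc => ?_, fun hnu ω hω =>
      exists_occursAt_of_nu_pos hω hnu⟩
    obtain ⟨R, hR, hgap⟩ := hΩ.exists_forall_occursIn hocc
    exact lt_of_lt_of_le (EReal.coe_pos.2 (by positivity))
      (one_div_le_nu_of_forall_occursIn hv hR hgap)
  refine ⟨main, fun ⟨C, hC, hCnu⟩ => main.2 fun v hvW hv => ?_⟩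
  exact lt_of_lt_of_le (EReal.coe_pos.2 hC) (hCnu v hvW hv)

/-- a subshift is minimal iff `ν(v) > 0` for every nonempty `v ∈ W`;
in particular (PQ) implies minimality. -/
theorem minimal_iff_nu_pos
    {A : Type*} [Fintype A] [Nonempty A] [TopologicalSpace A] [DiscreteTopology A]
    (Ω : Set (ℤ → A)) (hΩ : IsSubshift Ω) :
    (IsMinimal Ω ↔ ∀ v ∈ words Ω, v ≠ [] → (0 : EReal) < nu (words Ω) v) ∧
      (PQ (words Ω) → IsMinimal Ω) :=
  minimal_iff_nu_pos_general Ω hΩ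

end SubshiftErgodic
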